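/- If one sender's message count s1 satisfies s1 ≥ s2+...+sk = m (the total sent by all others), and all n = s1 + m receivers receive one message each, then the configuration count is n!/(s1! s2! ... sk!); moreover, for fixed s2,...,sk with each equal to 1 (so m = k−1), the count of nonnegative integer matrices with column sums (s1, 1,...,1) and row sums corresponding to receivers (s1, 1,...,1) (one receiver receiving s1 and k−1 receivers receiving one each) is independent of s1 once s1 ≥ k−1. -/

import Mathlib

/-!
A monomial of degree `n` in `(∑ X i) ^ n` records a sender for each of the `n` messages, so the
coefficient of `∏ X i ^ s i` is the multinomial coefficient.

For the stabilization, let `t` have row and column sums `(a, 1, …, 1)` with `m` ones. Column `0`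
sums to `a`, and each of its other `m` entries is at most its row sum `1`, so `t 0 0 ≥ a - m`.
Hence once `a ≥ m`, adding `d` to the corner entry `t 0 0` is a bijection onto the matrices with
margins `(a + d, 1, …, 1)`.
-/

open MvPolynomial Finset

/-- The complete homogeneous symmetric polynomial of degree `m` in `k` variables. -/
noncomputable def hpoly (k m : ℕ) : MvPolynomial (Fin k) ℕ :=
  ∑ d ∈ Finset.Nat.antidiagonalTuple k m, ∏ i, MvPolynomial.X i ^ d i

theorem hpoly_eq_hsymm (k m : ℕ) : hpoly k m = hsymm (Fin k) ℕ m := by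
  rw [hpoly, ← piAntidiag_univ_fin_eq_antidiagonalTuple, ← map_sym_eq_piAntidiag, sum_map,
    sym_univ, hsymm]
  refine Fintype.sum_congr _ _ fun s => ?_
  rw [prod_multiset_map_count]
  refine (prod_subset (subset_univ _) fun i _ hi => ?_).symm
  change X i ^ Multiset.count i (s : Multiset (Fin k)) = 1
  rw [Multiset.count_eq_zero_of_notMem (by simpa using hi), pow_zero]

theorem coeff_hpoly_one_pow (k : ℕ) (s : Fin k → ℕ) :
    coeff (Finsupp.equivFunOnFinite.symm s) (hpoly k 1 ^ ∑ i, s i) =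
      (∑ i, s i).factorial / ∏ i, (s i).factorial := by
  rw [hpoly_eq_hsymm, hsymm_one, coeff_sum_X_pow_of_fintype,
    Finsupp.sum_fintype _ _ fun _ => rfl, Finsupp.multinomial_eq_of_support_subset (subset_univ _)]
  exact if_pos rfl

section ContingencyTables

variable {ι κ : Type*} [Fintype ι] [Fintype κ]

def contingencyTables (r : ι → ℕ) (c : κ → ℕ) : Set (ι → κ → ℕ) :=
  {t | (∀ j, ∑ i, t j i = r j) ∧ ∀ i, ∑ j, t j i = c i}

theorem le_apply_add_sum_erase_of_mem_contingencyTables [DecidableEq ι] {r : ι → ℕ}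
    {c : κ → ℕ} {t : ι → κ → ℕ} (ht : t ∈ contingencyTables r c) (j₀ : ι) (i : κ) :
    c i ≤ t j₀ i + ∑ j ∈ univ.erase j₀, r j := by
  rw [← ht.2 i, ← add_sum_erase _ _ (mem_univ j₀)]
  gcongr with j
  exact ht.1 j ▸ single_le_sum (fun _ _ => Nat.zero_le _) (mem_univ i)

variable [DecidableEq ι] [DecidableEq κ]

theorem add_single_mem_contingencyTables_iff {r : ι → ℕ} {c : κ → ℕ} {t : ι → κ → ℕ}
    (j₀ : ι) (i₀ : κ) (d : ℕ) :
    t + Pi.single j₀ (Pi.single i₀ d) ∈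
        contingencyTables (r + Pi.single j₀ d) (c + Pi.single i₀ d) ↔
      t ∈ contingencyTables r c := by
  have hrow (j : ι) :
      ∑ i, (Pi.single j₀ (Pi.single i₀ d) : ι → κ → ℕ) j i = (Pi.single j₀ d : ι → ℕ) j := by
    rcases eq_or_ne j j₀ with rfl | hj <;> simp [*]
  have hcol (i : κ) :
      ∑ j, (Pi.single j₀ (Pi.single i₀ d) : ι → κ → ℕ) j i = (Pi.single i₀ d : κ → ℕ) i := by
    rw [← Finset.sum_apply, sum_pi_single']
    simp
  simp only [contingencyTables, Set.mem_ofPred_eq, Pi.add_apply, sum_add_distrib, hrow, hcol,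
    Nat.add_right_cancel_iff]

theorem ncard_contingencyTables_add_single {r : ι → ℕ} {c : κ → ℕ} {j₀ : ι} {i₀ : κ}
    (h : ∑ j ∈ univ.erase j₀, r j ≤ c i₀) (d : ℕ) :
    (contingencyTables (r + Pi.single j₀ d) (c + Pi.single i₀ d)).ncard =
      (contingencyTables r c).ncard := by
  set E : ι → κ → ℕ := Pi.single j₀ (Pi.single i₀ d)
  have hpre : (· + E) ⁻¹' contingencyTables (r + Pi.single j₀ d) (c + Pi.single i₀ d) =
      contingencyTables r c :=
    Set.ext fun t => add_single_mem_contingencyTables_iff j₀ i₀ d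
  rw [← hpre, Set.ncard_preimage_of_injective_subset_range (add_left_injective E)]
  intro t' ht'
  have hcorner : d ≤ t' j₀ i₀ := by
    have hrest : ∑ j ∈ univ.erase j₀, (r + Pi.single j₀ d : ι → ℕ) j = ∑ j ∈ univ.erase j₀, r j :=
      sum_congr rfl fun j hj => by simp [ne_of_mem_erase hj]
    have := le_apply_add_sum_erase_of_mem_contingencyTables ht' j₀ i₀
    rw [hrest, Pi.add_apply, Pi.single_eq_same] at this
    omega
  refine ⟨t' - E, funext fun j => funext fun i => ?_⟩
  rcases eq_or_ne j j₀ with rfl | hj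
  · rcases eq_or_ne i i₀ with rfl | hi
    · simp [E, hcorner]
    · simp [E, hi]
  · simp [E, hj]

theorem ncard_contingencyTables_ite_of_le (j₀ : ι) {a b : ℕ} (ha : Fintype.card ι - 1 ≤ a)
    (hab : a ≤ b) :
    (contingencyTables (fun j => if j = j₀ then a else 1)
        (fun i => if i = j₀ then a else 1)).ncard =
      (contingencyTables (fun j => if j = j₀ then b else 1)
        (fun i => if i = j₀ then b else 1)).ncard := by
  obtain ⟨d, rfl⟩ := Nat.exists_eq_add_of_le hab
  have hshift : (fun j => if j = j₀ then a + d else 1) =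
      (fun j => if j = j₀ then a else 1) + Pi.single j₀ d := by
    funext j
    rcases eq_or_ne j j₀ with rfl | hj <;> simp [*]
  have hrest : ∑ j ∈ univ.erase j₀, (if j = j₀ then a else 1) ≤ if j₀ = j₀ then a else 1 := by
    rw [sum_congr rfl fun j hj => if_neg (ne_of_mem_erase hj), if_pos rfl]
    simpa [card_erase_of_mem] using ha
  rw [hshift, ncard_contingencyTables_add_single (c := fun i => if i = j₀ then a else 1) hrest]

end ContingencyTables

theorem stmt15_general (m : ℕ) (s : Fin (m + 1) → ℕ) (n : ℕ)
    (hn : n = ∑ j, s j) :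
    MvPolynomial.coeff (Finsupp.equivFunOnFinite.symm s) ((hpoly (m + 1) 1) ^ n) =
        Nat.factorial n / ∏ j, Nat.factorial (s j)
    ∧ ∀ a b : ℕ, m ≤ a → m ≤ b →
        Set.ncard {t : Fin (m + 1) → Fin (m + 1) → ℕ |
            (∀ j, ∑ i, t j i = if j = 0 then a else 1) ∧
            (∀ i, ∑ j, t j i = if i = 0 then a else 1)} =
        Set.ncard {t : Fin (m + 1) → Fin (m + 1) → ℕ |
            (∀ j, ∑ i, t j i = if j = 0 then b else 1) ∧
            (∀ i, ∑ j, t j i = if i = 0 then b else 1)} := by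
  refine ⟨hn ▸ coeff_hpoly_one_pow (m + 1) s, fun a b ha hb => ?_⟩
  rcases le_total a b with hab | hba
  · exact ncard_contingencyTables_ite_of_le 0 (by simpa using ha) hab
  · exact (ncard_contingencyTables_ite_of_le 0 (by simpa using hb) hba).symm

theorem stmt15 (m : ℕ) (s : Fin (m + 1) → ℕ) (n : ℕ)
    (hn : n = ∑ j, s j) (hdom : ∑ j ∈ Finset.univ.erase 0, s j ≤ s 0) :
    MvPolynomial.coeff (Finsupp.equivFunOnFinite.symm s) ((hpoly (m + 1) 1) ^ n) =
        Nat.factorial n / ∏ j, Nat.factorial (s j)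
    ∧ ∀ a b : ℕ, m ≤ a → m ≤ b →
        Set.ncard {t : Fin (m + 1) → Fin (m + 1) → ℕ |
            (∀ j, ∑ i, t j i = if j = 0 then a else 1) ∧
            (∀ i, ∑ j, t j i = if i = 0 then a else 1)} =
        Set.ncard {t : Fin (m + 1) → Fin (m + 1) → ℕ |
            (∀ j, ∑ i, t j i = if j = 0 then b else 1) ∧
            (∀ i, ∑ j, t j i = if i = 0 then b else 1)} :=
  stmt15_general m s n hn
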